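/- arXiv:1406.2302 — 3 statements merged into one kernel-verified Lean document; each statement's English description precedes it below -/
import Mathlib

section
/- Let U ⊆ ℝ³ be a connected open set, g a real-analytic Lorentz metric on U, and K₁, K₂, K₃ Killing fields of g on U. Suppose the real span 𝔤 of K₁, K₂, K₃ is closed under the Lie bracket of vector fields and is unimodular, i.e., for every X ∈ 𝔤 the trace of the linear map ad X : 𝔤 → 𝔤, Y ↦ [X,Y], is zero. If the vectors K₁(p₀), K₂(p₀), K₃(p₀) are linearly independent for some p₀ ∈ U, then K₁(p), K₂(p), K₃(p) are linearly independent for every p ∈ U. -/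
/-!
The Gram determinant `F(q) = det (g_q(Kᵢ(q), Kⱼ(q)))ᵢⱼ = det g_q · det (Kᵢ(q))²` vanishes
exactly where the `Kᵢ` are dependent, since `g` is nondegenerate. As `K_k` is Killing and
`[K_k, Kᵢ] = ∑ₗ c_{kil} K_l`, the derivative of the Gram matrix `G` along `K_k` is `C G + G Cᵀ`
with `C = (c_{kil})ᵢₗ`, so Jacobi's formula gives `K_k F = tr ((C G + G Cᵀ) adj G) = 2 tr C · F`,
which is `0` by unimodularity. Where the `Kᵢ` are independent they span `ℝ³`, so `dF = 0` there:
`F` is locally constant on `{F ≠ 0}`, and connectedness of `U` gives `F ≡ F(p₀) ≠ 0`.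
-/

open Matrix

noncomputable section

abbrev V3 : Type := Fin 3 → ℝ

/-- The value of the metric (given by a field of symmetric matrices) at `p` on `u, v`. -/
def gval (M : V3 → Matrix (Fin 3) (Fin 3) ℝ) (p u v : V3) : ℝ :=
  u ⬝ᵥ (M p).mulVec v

/-- `g_p` is a nondegenerate symmetric bilinear form of signature (2,1): there is a basis
of `ℝ³` in which its matrix is `diag(1,1,-1)`. -/
def IsLorentzAt (M : V3 → Matrix (Fin 3) (Fin 3) ℝ) (p : V3) : Prop :=
  (M p).IsSymm ∧
    ∃ b : Module.Basis (Fin 3) ℝ V3, ∀ i j,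
      gval M p (b i) (b j) = (Matrix.diagonal ![1, 1, -1] : Matrix (Fin 3) (Fin 3) ℝ) i j

/-- A real-analytic Lorentz metric on `U`. -/
def IsAnalyticLorentzMetric (U : Set V3) (M : V3 → Matrix (Fin 3) (Fin 3) ℝ) : Prop :=
  (∀ p ∈ U, IsLorentzAt M p) ∧ ∀ i j, AnalyticOnNhd ℝ (fun p => M p i j) U

/-- A Killing field of the metric on `U`. -/
def IsKillingField (U : Set V3) (M : V3 → Matrix (Fin 3) (Fin 3) ℝ) (X : V3 → V3) : Prop :=
  AnalyticOnNhd ℝ X U ∧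
    ∀ p ∈ U, ∀ u v : V3,
      fderiv ℝ (fun q => gval M q u v) p (X p)
        + gval M p (fderiv ℝ X p u) v + gval M p u (fderiv ℝ X p v) = 0

/-- The Lie bracket of vector fields: `[X,Y](p) = D_pY (X(p)) − D_pX (Y(p))`. -/
def VB (X Y : V3 → V3) : V3 → V3 :=
  fun p => fderiv ℝ Y p (X p) - fderiv ℝ X p (Y p)

namespace Matrix

variable {n : Type*} [Fintype n] [DecidableEq n]

theorem sum_det_updateRow_eq_trace_mul_adjugate {R : Type*} [CommRing R] (A H : Matrix n n R) :
    ∑ i, (A.updateRow i (H i)).det = trace (H * adjugate A) := by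
  simp only [← cramer_transpose_apply, cramer_eq_adjugate_mulVec, ← adjugate_transpose, trace,
    diag, mul_apply, mulVec, dotProduct, transpose_apply, mul_comm]

theorem trace_mul_add_mul_transpose_mul_adjugate {R : Type*} [CommRing R] (A C : Matrix n n R) :
    trace ((C * A + A * Cᵀ) * adjugate A) = 2 * trace C * det A := by
  rw [add_mul, trace_add, Matrix.mul_assoc, mul_adjugate, Matrix.mul_assoc, trace_mul_comm A,
    Matrix.mul_assoc, adjugate_mul, Matrix.mul_smul, Matrix.mul_smul, trace_smul, trace_smul,
    Matrix.mul_one, Matrix.mul_one, trace_transpose, smul_eq_mul]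
  ring

variable (n) in
def detContinuousMultilinearMap : ContinuousMultilinearMap ℝ (fun _ : n => n → ℝ) ℝ :=
  ⟨detRowAlternating.toMultilinearMap, continuous_id.matrix_det⟩

variable {E : Type*} [NormedAddCommGroup E] [NormedSpace ℝ E] {A : E → Matrix n n ℝ} {p : E}

theorem differentiableAt_det (hA : ∀ i j, DifferentiableAt ℝ (fun q => A q i j) p) :
    DifferentiableAt ℝ (fun q => (A q).det) p :=
  (HasFDerivAt.multilinear_comp (detContinuousMultilinearMap n)
    fun i => (differentiableAt_pi.2 (hA i)).hasFDerivAt).differentiableAt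

theorem fderiv_det_apply (hA : ∀ i j, DifferentiableAt ℝ (fun q => A q i j) p) (w : E) :
    fderiv ℝ (fun q => (A q).det) p w =
      trace (of (fun i j => fderiv ℝ (fun q => A q i j) p w) * adjugate (A p)) := by
  have hD : HasFDerivAt (fun q => (A q).det) _ p :=
    HasFDerivAt.multilinear_comp (detContinuousMultilinearMap n)
      fun i => (differentiableAt_pi.2 (hA i)).hasFDerivAt
  rw [hD.fderiv, ← sum_det_updateRow_eq_trace_mul_adjugate]
  simp only [detContinuousMultilinearMap, fderiv_pi (hA _), _root_.sum_apply,
    ContinuousLinearMap.comp_apply, ContinuousLinearMap.coe_pi',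
    ContinuousMultilinearMap.toContinuousLinearMap_apply]
  rfl

end Matrix

theorem IsOpen.eq_of_fderiv_eq_zero_of_ne_zero {E G : Type*} [NormedAddCommGroup E]
    [NormedSpace ℝ E] [NormedAddCommGroup G] [NormedSpace ℝ G] {f : E → G} {U : Set E}
    (hUo : IsOpen U) (hU : IsPreconnected U) (hf : DifferentiableOn ℝ f U)
    (hf' : ∀ q ∈ U, f q ≠ 0 → fderiv ℝ f q = 0) {p₀ : E} (hp₀ : p₀ ∈ U) (h₀ : f p₀ ≠ 0) :
    ∀ q ∈ U, f q = f p₀ := by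
  have hW : IsOpen (U ∩ f ⁻¹' {0}ᶜ) :=
    hf.continuousOn.isOpen_inter_preimage hUo isOpen_compl_singleton
  have hS : IsOpen ((U ∩ f ⁻¹' {0}ᶜ) ∩ f ⁻¹' {f p₀}) :=
    hW.isOpen_inter_preimage_of_fderiv_eq_zero (hf.mono Set.inter_subset_left)
      (fun q hq => hf' q hq.1 hq.2) _
  have hT : IsOpen (U ∩ f ⁻¹' {f p₀}ᶜ) :=
    hf.continuousOn.isOpen_inter_preimage hUo isOpen_compl_singleton
  have hsub := hU.subset_left_of_subset_union hS hT ?_ ?_ ⟨p₀, hp₀, ⟨hp₀, h₀⟩, rfl⟩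
  · exact fun q hq => (hsub hq).2
  · exact Set.disjoint_left.2 fun q hS hT => hT.2 hS.2
  · intro q hq
    by_cases h : f q = f p₀
    · exact Or.inl ⟨⟨hq, fun h0 => h₀ (h ▸ h0)⟩, h⟩
    · exact Or.inr ⟨hq, h⟩

theorem gval_eq_sum (M : V3 → Matrix (Fin 3) (Fin 3) ℝ) (p u v : V3) :
    gval M p u v = ∑ a, ∑ b, u a * M p a b * v b := by
  simp only [gval, dotProduct, mulVec, Finset.mul_sum, mul_assoc]

theorem gval_eq_toLinearMap₂' (M : V3 → Matrix (Fin 3) (Fin 3) ℝ) (p u v : V3) :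
    gval M p u v = toLinearMap₂' ℝ (M p) u v :=
  (toLinearMap₂'_apply' _ _ _).symm

def gramMatrix (M : V3 → Matrix (Fin 3) (Fin 3) ℝ) (p : V3) (v : Fin 3 → V3) :
    Matrix (Fin 3) (Fin 3) ℝ :=
  of fun i j => gval M p (v i) (v j)

theorem det_gramMatrix (M : V3 → Matrix (Fin 3) (Fin 3) ℝ) (p : V3) (v : Fin 3 → V3) :
    (gramMatrix M p v).det = (M p).det * (of v).det ^ 2 := by
  have : gramMatrix M p v = of v * M p * (of v)ᵀ := by
    ext i j
    simp only [gramMatrix, gval, of_apply, mul_apply, transpose_apply, dotProduct, mulVec,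
      Finset.mul_sum, Finset.sum_mul, mul_assoc]
    exact Finset.sum_comm
  rw [this, det_mul, det_mul, det_transpose]
  ring

section Metric

variable {M : V3 → Matrix (Fin 3) (Fin 3) ℝ} {p : V3}

theorem IsLorentzAt.det_ne_zero (h : IsLorentzAt M p) : (M p).det ≠ 0 := by
  obtain ⟨b, hb⟩ := h.2
  have hdiag : gramMatrix M p b = diagonal ![1, 1, -1] := by ext i j; exact hb i j
  have hdet : (M p).det * (of b).det ^ 2 = -1 := by
    rw [← det_gramMatrix, hdiag, det_diagonal, Fin.prod_univ_three]; simp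
  exact left_ne_zero_of_mul (hdet ▸ neg_ne_zero.2 one_ne_zero)

theorem linearIndependent_iff_det_gramMatrix_ne_zero (hM : (M p).det ≠ 0) (v : Fin 3 → V3) :
    LinearIndependent ℝ v ↔ (gramMatrix M p v).det ≠ 0 := by
  have hv : LinearIndependent ℝ v ↔ (of v).det ≠ 0 := by
    rw [← isUnit_iff_ne_zero, ← isUnit_iff_isUnit_det, ← linearIndependent_rows_iff_isUnit]; rfl
  simp [hv, det_gramMatrix, hM]

variable {X Y : V3 → V3}

theorem differentiableAt_gval (hM : ∀ a b, DifferentiableAt ℝ (fun q => M q a b) p)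
    (hX : DifferentiableAt ℝ X p) (hY : DifferentiableAt ℝ Y p) :
    DifferentiableAt ℝ (fun q => gval M q (X q) (Y q)) p := by
  have hXa : ∀ a, DifferentiableAt ℝ (fun q => X q a) p := differentiableAt_pi.1 hX
  have hYb : ∀ b, DifferentiableAt ℝ (fun q => Y q b) p := differentiableAt_pi.1 hY
  simp only [gval_eq_sum]
  fun_prop

theorem fderiv_gval_apply (hM : ∀ a b, DifferentiableAt ℝ (fun q => M q a b) p)
    (hX : DifferentiableAt ℝ X p) (hY : DifferentiableAt ℝ Y p) (w : V3) :
    fderiv ℝ (fun q => gval M q (X q) (Y q)) p w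
      = gval M p (fderiv ℝ X p w) (Y p)
        + ∑ a, ∑ b, X p a * fderiv ℝ (fun q => M q a b) p w * Y p b
        + gval M p (X p) (fderiv ℝ Y p w) := by
  have hXa : ∀ a, DifferentiableAt ℝ (fun q => X q a) p := differentiableAt_pi.1 hX
  have hYb : ∀ b, DifferentiableAt ℝ (fun q => Y q b) p := differentiableAt_pi.1 hY
  have hXM : ∀ a b, DifferentiableAt ℝ (fun q => X q a * M q a b) p :=
    fun a b => (hXa a).fun_mul (hM a b)
  simp only [gval_eq_sum, ← Finset.sum_add_distrib]
  rw [fderiv_fun_sum fun a _ => .fun_sum fun b _ => (hXM a b).fun_mul (hYb b), _root_.sum_apply]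
  refine Finset.sum_congr rfl fun a _ => ?_
  rw [fderiv_fun_sum fun b _ => (hXM a b).fun_mul (hYb b), _root_.sum_apply]
  refine Finset.sum_congr rfl fun b _ => ?_
  rw [fderiv_fun_mul (hXM a b) (hYb b), fderiv_fun_mul (hXa a) (hM a b), fderiv_pi hXa,
    fderiv_pi hYb]
  simp only [smul_add, _root_.add_apply, _root_.smul_apply, smul_eq_mul,
    ContinuousLinearMap.coe_pi']
  ring

theorem IsKillingField.fderiv_gval_apply_self {U : Set V3} {Z : V3 → V3}
    (hZ : IsKillingField U M Z) (hp : p ∈ U) (hM : ∀ a b, DifferentiableAt ℝ (fun q => M q a b) p)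
    (hX : DifferentiableAt ℝ X p) (hY : DifferentiableAt ℝ Y p) :
    fderiv ℝ (fun q => gval M q (X q) (Y q)) p (Z p)
      = gval M p (VB Z X p) (Y p) + gval M p (X p) (VB Z Y p) := by
  have hXY := fderiv_gval_apply hM hX hY (Z p)
  have hconst := fderiv_gval_apply hM (differentiableAt_const (X p))
    (differentiableAt_const (Y p)) (Z p)
  have hkill := hZ.2 p hp (X p) (Y p)
  simp only [fderiv_fun_const, Pi.zero_apply, _root_.zero_apply] at hconst
  simp only [VB, gval_eq_toLinearMap₂', map_sub, map_zero, LinearMap.sub_apply,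
    LinearMap.zero_apply] at *
  linarith

theorem IsKillingField.fderiv_gramMatrix_apply_self {U : Set V3} {Z : V3 → V3}
    (hZ : IsKillingField U M Z) (hp : p ∈ U) (hM : ∀ a b, DifferentiableAt ℝ (fun q => M q a b) p)
    {X : Fin 3 → V3 → V3} (hX : ∀ i, DifferentiableAt ℝ (X i) p) {C : Matrix (Fin 3) (Fin 3) ℝ}
    (hC : ∀ i, VB Z (X i) p = ∑ l, C i l • X l p) :
    of (fun i j => fderiv ℝ (fun q => gramMatrix M q (fun l => X l q) i j) p (Z p))
      = C * gramMatrix M p (fun l => X l p) + gramMatrix M p (fun l => X l p) * Cᵀ := by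
  ext i j
  simp only [gramMatrix, of_apply]
  rw [hZ.fderiv_gval_apply_self hp hM (hX i) (hX j), hC, hC]
  simp only [Matrix.add_apply, mul_apply, of_apply, transpose_apply, gval_eq_toLinearMap₂',
    map_sum, map_smul, LinearMap.sum_apply, LinearMap.smul_apply, smul_eq_mul, mul_comm]

theorem IsKillingField.fderiv_det_gramMatrix_apply_self {U : Set V3} {Z : V3 → V3}
    (hZ : IsKillingField U M Z) (hp : p ∈ U) (hM : ∀ a b, DifferentiableAt ℝ (fun q => M q a b) p)
    {X : Fin 3 → V3 → V3} (hX : ∀ i, DifferentiableAt ℝ (X i) p) {C : Matrix (Fin 3) (Fin 3) ℝ}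
    (hC : ∀ i, VB Z (X i) p = ∑ l, C i l • X l p) :
    fderiv ℝ (fun q => (gramMatrix M q fun l => X l q).det) p (Z p)
      = 2 * trace C * (gramMatrix M p fun l => X l p).det := by
  rw [fderiv_det_apply (A := fun q => gramMatrix M q fun l => X l q)
      fun i j => differentiableAt_gval hM (hX i) (hX j),
    hZ.fderiv_gramMatrix_apply_self hp hM hX hC, trace_mul_add_mul_transpose_mul_adjugate]

theorem fderiv_det_gramMatrix_eq_zero {U : Set V3} {K : Fin 3 → V3 → V3}
    (hK : ∀ i, IsKillingField U M (K i)) (hp : p ∈ U)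
    (hM : ∀ a b, DifferentiableAt ℝ (fun q => M q a b) p)
    (hKp : ∀ i, DifferentiableAt ℝ (K i) p) {c : Fin 3 → Fin 3 → Fin 3 → ℝ}
    (hclosed : ∀ i j, VB (K i) (K j) p = ∑ k, c i j k • K k p) (htrace : ∀ i, ∑ j, c i j j = 0)
    (hind : LinearIndependent ℝ fun i => K i p) :
    fderiv ℝ (fun q => (gramMatrix M q fun i => K i q).det) p = 0 := by
  let b := basisOfLinearIndependentOfCardEqFinrank hind (by simp)
  refine ContinuousLinearMap.coe_injective (b.ext fun k => ?_)
  rw [coe_basisOfLinearIndependentOfCardEqFinrank, ContinuousLinearMap.coe_coe,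
    (hK k).fderiv_det_gramMatrix_apply_self hp hM hKp (C := of (c k)) (hclosed k)]
  simp [trace, htrace k]

end Metric

/-- if `K₁, K₂, K₃` are Killing fields of a real-analytic Lorentz metric on a
connected open set `U`, whose span `𝔤` is closed under the Lie bracket (with structure
constants `c`) and unimodular (`tr (ad X) = 0` for all `X = ∑ aᵢ Kᵢ ∈ 𝔤`), and the `Kᵢ`
are linearly independent at some point `p₀ ∈ U`, then they are linearly independent at
every point of `U`. -/
theorem killing_unimodular_independent
    (U : Set V3) (hUopen : IsOpen U) (hUconn : IsConnected U)
    (M : V3 → Matrix (Fin 3) (Fin 3) ℝ) (hM : IsAnalyticLorentzMetric U M)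
    (K : Fin 3 → (V3 → V3)) (hK : ∀ i, IsKillingField U M (K i))
    (c : Fin 3 → Fin 3 → Fin 3 → ℝ)
    (hclosed : ∀ i j, ∀ p ∈ U, VB (K i) (K j) p = ∑ k, c i j k • K k p)
    (hunimod : ∀ a : Fin 3 → ℝ, ∑ i, ∑ j, a i * c i j j = 0)
    (p₀ : V3) (hp₀ : p₀ ∈ U)
    (hind : LinearIndependent ℝ (fun i => K i p₀)) :
    ∀ p ∈ U, LinearIndependent ℝ (fun i => K i p) := by
  have hMd : ∀ p ∈ U, ∀ a b, DifferentiableAt ℝ (fun q => M q a b) p :=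
    fun p hp a b => (hM.2 a b p hp).differentiableAt
  have hKd : ∀ p ∈ U, ∀ i, DifferentiableAt ℝ (K i) p :=
    fun p hp i => ((hK i).1 p hp).differentiableAt
  have htrace : ∀ i, ∑ j, c i j j = 0 := fun i => by
    simpa [Pi.single_apply] using hunimod (Pi.single i 1)
  have hdet : ∀ p ∈ U, LinearIndependent ℝ (fun i => K i p) ↔
      (gramMatrix M p fun i => K i p).det ≠ 0 :=
    fun p hp => linearIndependent_iff_det_gramMatrix_ne_zero (hM.1 p hp).det_ne_zero _
  have hconst := hUopen.eq_of_fderiv_eq_zero_of_ne_zero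
    (f := fun q => (gramMatrix M q fun i => K i q).det) hUconn.isPreconnected
    (fun p hp => (differentiableAt_det fun i j =>
      differentiableAt_gval (hMd p hp) (hKd p hp i) (hKd p hp j)).differentiableWithinAt)
    (fun p hp hF => fderiv_det_gramMatrix_eq_zero hK hp (hMd p hp) (hKd p hp)
      (fun i j => hclosed i j p hp) htrace ((hdet p hp).2 hF))
    hp₀ ((hdet p₀ hp₀).1 hind)
  intro p hp
  rw [hdet p hp, hconst p hp]
  exact (hdet p₀ hp₀).1 hind
end
end

section
/- For all C, D ∈ ℝ, the three vector fields p ↦ (1,0,0) (that is, ∂/∂x), p ↦ (0,1,0) (that is, ∂/∂h), and (x,h,z) ↦ (0,−h,z) (that is, −h ∂/∂h + z ∂/∂z) are Killing fields of g_{C,D} on ℝ³. -/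
open Matrix

noncomputable section

/-- The matrix at `p = (x,h,z)` of the metric `g_{C,D} = dx² + dh dz + C z² dh² + D z dx dh`
in the standard basis of `ℝ³`. -/
def gCD (C D : ℝ) (p : V3) : Matrix (Fin 3) (Fin 3) ℝ :=
  !![1, D * p 2 / 2, 0;
     D * p 2 / 2, C * p 2 ^ 2, 1 / 2;
     0, 1 / 2, 0]

/-- `T` is a Killing field of the metric `g` (given by a field of matrices):
`(D_p(q ↦ g_q(u,v)))(T(p)) + g_p((D_pT)(u), v) + g_p(u, (D_pT)(v)) = 0`. -/
def IsKillingVF (g : V3 → Matrix (Fin 3) (Fin 3) ℝ) (T : V3 → V3) : Prop :=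
  ∀ p u v : V3,
    fderiv ℝ (fun q => u ⬝ᵥ (g q).mulVec v) p (T p)
      + (fderiv ℝ T p u) ⬝ᵥ (g p).mulVec v
      + u ⬝ᵥ (g p).mulVec (fderiv ℝ T p v) = 0

/-! The metric `g_{C,D}` depends on `z` alone, so translations in `x` and `h` preserve it, and the
field `−h ∂/∂h + z ∂/∂z` generates the flow `(x, h, z) ↦ (x, e^{-t} h, e^t z)`, which preserves
`dh dz`, `z² dh²` and `z dx dh`. Infinitesimally both facts reduce to an identity between
polynomials in `z`. -/

theorem fderiv_mulVec {𝕜 n : Type*} [NontriviallyNormedField 𝕜] [CompleteSpace 𝕜] [Fintype n]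
    [DecidableEq n] (A : Matrix n n 𝕜) (p : n → 𝕜) :
    fderiv 𝕜 (A *ᵥ ·) p = LinearMap.toContinuousLinearMap (mulVecLin A) :=
  (LinearMap.toContinuousLinearMap (mulVecLin A)).fderiv

theorem hasDerivAt_quadratic (a b c z : ℝ) :
    HasDerivAt (fun z => a + b * z + c * z ^ 2) (b + 2 * c * z) z :=
  ((((hasDerivAt_id z).const_mul b).const_add a).add ((hasDerivAt_pow 2 z).const_mul c)).congr_deriv
    (by norm_num; ring)

section KillingCriteria

variable {g : V3 → Matrix (Fin 3) (Fin 3) ℝ}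

theorem isKillingVF_const_iff (c : V3) :
    IsKillingVF g (fun _ => c) ↔ ∀ p u v : V3, fderiv ℝ (fun q => u ⬝ᵥ g q *ᵥ v) p c = 0 := by
  simp [IsKillingVF]

theorem isKillingVF_mulVec_iff (A : Matrix (Fin 3) (Fin 3) ℝ) :
    IsKillingVF g (A *ᵥ ·) ↔ ∀ p u v : V3,
      fderiv ℝ (fun q => u ⬝ᵥ g q *ᵥ v) p (A *ᵥ p) + (A *ᵥ u) ⬝ᵥ g p *ᵥ v
        + u ⬝ᵥ g p *ᵥ (A *ᵥ v) = 0 := by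
  simp [IsKillingVF, fderiv_mulVec]

end KillingCriteria

section MetricGCD

variable (C D : ℝ)

theorem dotProduct_gCD_mulVec (u v q : V3) :
    u ⬝ᵥ gCD C D q *ᵥ v = u 0 * v 0 + (u 1 * v 2 + u 2 * v 1) / 2
      + D / 2 * (u 0 * v 1 + u 1 * v 0) * q 2 + C * (u 1 * v 1) * q 2 ^ 2 := by
  simp only [dotProduct, mulVec, gCD, of_apply, cons_val', cons_val_fin_one, Fin.sum_univ_three,
    cons_val_zero, cons_val_one, cons_val, one_mul, zero_mul, add_zero, zero_add]
  ring

theorem hasFDerivAt_dotProduct_gCD_mulVec (u v p : V3) :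
    HasFDerivAt (fun q => u ⬝ᵥ gCD C D q *ᵥ v)
      ((D / 2 * (u 0 * v 1 + u 1 * v 0) + 2 * (C * (u 1 * v 1)) * p 2) •
        ContinuousLinearMap.proj (R := ℝ) (φ := fun _ : Fin 3 => ℝ) 2)
      p := by
  simp_rw [dotProduct_gCD_mulVec]
  exact (hasDerivAt_quadratic (u 0 * v 0 + (u 1 * v 2 + u 2 * v 1) / 2)
    (D / 2 * (u 0 * v 1 + u 1 * v 0)) (C * (u 1 * v 1)) (p 2)).comp_hasFDerivAt p
    (hasFDerivAt_apply (𝕜 := ℝ) 2 p)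

theorem fderiv_dotProduct_gCD_mulVec (u v p w : V3) :
    fderiv ℝ (fun q => u ⬝ᵥ gCD C D q *ᵥ v) p w
      = (D / 2 * (u 0 * v 1 + u 1 * v 0) + 2 * (C * (u 1 * v 1)) * p 2) * w 2 := by
  simp [(hasFDerivAt_dotProduct_gCD_mulVec C D u v p).fderiv, mul_comm]

theorem isKillingVF_gCD_const {c : V3} (hc : c 2 = 0) : IsKillingVF (gCD C D) (fun _ => c) := by
  simp [isKillingVF_const_iff, fderiv_dotProduct_gCD_mulVec, hc]

theorem isKillingVF_gCD_scaling : IsKillingVF (gCD C D) (fun p => ![0, -p 1, p 2]) := by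
  have hT : (fun p : V3 => ![0, -p 1, p 2]) = (diagonal ![0, -1, 1] *ᵥ ·) := by
    ext p i; fin_cases i <;> simp [mulVec_diagonal]
  rw [hT, isKillingVF_mulVec_iff]
  intro p u v
  rw [fderiv_dotProduct_gCD_mulVec]
  simp only [dotProduct_gCD_mulVec, mulVec_diagonal, cons_val, cons_val_zero, cons_val_one,
    one_mul, zero_mul, neg_mul, mul_neg]
  ring

end MetricGCD

/-- the vector fields `∂/∂x`, `∂/∂h` and `−h ∂/∂h + z ∂/∂z` are Killing
fields of `g_{C,D}` on `ℝ³`, for all `C, D ∈ ℝ`. -/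
theorem gCD_three_killing_fields (C D : ℝ) :
    IsKillingVF (gCD C D) (fun _ => ![1, 0, 0]) ∧
    IsKillingVF (gCD C D) (fun _ => ![0, 1, 0]) ∧
    IsKillingVF (gCD C D) (fun p => ![0, -p 1, p 2]) :=
  ⟨isKillingVF_gCD_const C D rfl, isKillingVF_gCD_const C D rfl, isKillingVF_gCD_scaling C D⟩
end
end

section
/- For all C, D ∈ ℝ and every p = (x,h,z) ∈ ℝ³, the four vectors (1,0,0), (0,1,0), (0,−h,z), and (Dh, ½(D²−C)h², (C−D²)zh − 1) span ℝ³. (These are the values at p of four Killing fields of g_{C,D}, so g_{C,D} is locally homogeneous: its Killing fields evaluate onto the whole tangent space at every point.) -/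
noncomputable section

theorem Submodule.eq_top_of_mem_of_last_ne_zero {K : Type*} [Field K] (p : Submodule K (Fin 3 → K))
    (he₀ : ![1, 0, 0] ∈ p) (he₁ : ![0, 1, 0] ∈ p) {w : Fin 3 → K} (hw : w ∈ p) (hw₂ : w 2 ≠ 0) :
    p = ⊤ := by
  have he₂ : ![0, 0, 1] ∈ p := by
    have hcomb : ![0, 0, 1] = (w 2)⁻¹ • (w - w 0 • ![1, 0, 0] - w 1 • ![0, 1, 0]) := by
      ext i
      fin_cases i <;> simp [Matrix.vecHead, Matrix.vecTail, hw₂]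
    rw [hcomb]
    exact p.smul_mem _ (p.sub_mem (p.sub_mem hw (p.smul_mem _ he₀)) (p.smul_mem _ he₁))
  refine eq_top_iff.mpr fun v _ => ?_
  have hv : v = v 0 • ![1, 0, 0] + v 1 • ![0, 1, 0] + v 2 • ![0, 0, 1] := by
    ext i
    fin_cases i <;> simp
  rw [hv]
  exact p.add_mem (p.add_mem (p.smul_mem _ he₀) (p.smul_mem _ he₁)) (p.smul_mem _ he₂)

theorem killing_values_span_general (C D h z : ℝ) :
    Submodule.span ℝ
      ({![1, 0, 0], ![0, 1, 0], ![0, -h, z],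
        ![D * h, (D ^ 2 - C) / 2 * h ^ 2, (C - D ^ 2) * z * h - 1]} : Set V3) = ⊤ := by
  set v₃ : V3 := ![0, -h, z]
  set v₄ : V3 := ![D * h, (D ^ 2 - C) / 2 * h ^ 2, (C - D ^ 2) * z * h - 1]
  -- The `z h` terms cancel in the last coordinate of this combination, leaving `1`.
  have hw : ((C - D ^ 2) * h) • v₃ - v₄ ∈ Submodule.span ℝ {![1, 0, 0], ![0, 1, 0], v₃, v₄} :=
    Submodule.sub_mem _ (Submodule.smul_mem _ _ (Submodule.subset_span (by simp)))
      (Submodule.subset_span (by simp))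
  refine Submodule.eq_top_of_mem_of_last_ne_zero _ (Submodule.subset_span (by simp))
    (Submodule.subset_span (by simp)) hw ?_
  have hlast : (((C - D ^ 2) * h) • v₃ - v₄) 2 = 1 := by
    simp [v₃, v₄]
    ring
  simp [hlast]

/-- for all `C, D ∈ ℝ` and every `p = (x,h,z) ∈ ℝ³`, the four vectors
`(1,0,0)`, `(0,1,0)`, `(0,−h,z)` and `(Dh, ½(D²−C)h², (C−D²)zh − 1)` — the values at `p`
of four Killing fields of `g_{C,D}` — span `ℝ³`. -/
theorem killing_values_span (C D x h z : ℝ) :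
    Submodule.span ℝ
      ({![1, 0, 0], ![0, 1, 0], ![0, -h, z],
        ![D * h, (D ^ 2 - C) / 2 * h ^ 2, (C - D ^ 2) * z * h - 1]} : Set V3) = ⊤ :=
  killing_values_span_general C D h z
end
end
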